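/- Let (X_1,Y_1),...,(X_n,Y_n) be elements of a commutative ring. Then (∑_{i≠j} X_i^2 X_j)(∑_i X_i^2 Y_i)^2 equals the sum of the following augmented symmetric sums (in Vrbik's notation S over ordered distinct-index tuples): S_{{2,0},{1,0},{2,1},{2,1}} + 2 S_{{4,1},{1,0},{2,1}} + 2 S_{{3,1},{2,0},{2,1}} + S_{{4,2},{1,0},{2,0}} + 2 S_{{4,1},{3,1}} + S_{{5,2},{2,0}} + S_{{6,2},{1,0}}, where S_{{k_1,l_1},{k_2,l_2},...} = ∑_{i_1 ≠ i_2 ≠ ⋯ distinct} X_{i_1}^{k_1} Y_{i_1}^{l_1} X_{i_2}^{k_2} Y_{i_2}^{l_2} ⋯. -/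
import Mathlib

open Finset

/-- Vrbik's augmented symmetric sum `S_{{k_1,l_1},{k_2,l_2},...}`: the sum over
ordered tuples of pairwise distinct indices of `∏ X_{i_m}^{k_m} Y_{i_m}^{l_m}`. -/
def vrbikS {R : Type*} [CommRing R] {n : ℕ} (X Y : Fin n → R) (l : List (ℕ × ℕ)) : R :=
  ∑ j ∈ (Finset.univ : Finset (Fin l.length → Fin n)).filter Function.Injective,
    ∏ t, X (j t) ^ (l.get t).1 * Y (j t) ^ (l.get t).2

section Aux

variable {R : Type*} [CommRing R] {n : ℕ}

/-- auxiliary: `X i ^ p.1 * Y i ^ p.2`. -/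
def vF (X Y : Fin n → R) (p : ℕ × ℕ) (i : Fin n) : R := X i ^ p.1 * Y i ^ p.2

lemma vrbikS_two (X Y : Fin n → R) (a b : ℕ × ℕ) :
    vrbikS X Y [a, b] =
      ∑ i, ∑ j ∈ univ \ {i}, vF X Y a i * vF X Y b j := by
  rw [← Finset.sum_finset_product' ((univ ×ˢ univ).filter fun p : Fin n × Fin n => p.1 ≠ p.2)
    univ (fun i => univ \ {i}) (by simp [Ne, eq_comm])]
  show (∑ j ∈ (Finset.univ : Finset (Fin 2 → Fin n)).filter Function.Injective,
    ∏ t : Fin 2, X (j t) ^ ([a,b].get t).1 * Y (j t) ^ ([a,b].get t).2) = _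
  refine Finset.sum_nbij' (fun j => (j 0, j 1)) (fun p => ![p.1, p.2]) ?_ ?_ ?_ ?_ ?_
  · intro j hj
    simp only [mem_filter, mem_univ, mem_product, true_and, and_self] at hj ⊢
    exact fun h => (by omega : (0 : Fin 2) ≠ 1) (hj h)
  · intro p hp
    simp only [mem_filter, mem_univ, mem_product, true_and, and_self] at hp ⊢
    intro x y hxy
    fin_cases x <;> fin_cases y <;> simp_all
  · intro j _; funext t; fin_cases t <;> simp
  · intro p _; simp
  · intro j _
    simp [Fin.prod_univ_two, vF]

lemma vrbikS_three (X Y : Fin n → R) (a b c : ℕ × ℕ) :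
    vrbikS X Y [a, b, c] =
      ∑ i, ∑ j ∈ univ \ {i}, ∑ k ∈ univ \ {i, j},
        vF X Y a i * vF X Y b j * vF X Y c k := by
  rw [show (∑ i, ∑ j ∈ univ \ {i}, ∑ k ∈ univ \ {i, j},
        vF X Y a i * vF X Y b j * vF X Y c k)
      = ∑ p ∈ (univ : Finset (Fin n)).sigma (fun i =>
          ((univ \ {i}).sigma (fun j => univ \ ({i, j} : Finset (Fin n))))),
          vF X Y a p.1 * vF X Y b p.2.1 * vF X Y c p.2.2 by
    rw [Finset.sum_sigma]
    refine Finset.sum_congr rfl fun i _ => ?_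
    rw [Finset.sum_sigma]]
  show (∑ j ∈ (Finset.univ : Finset (Fin 3 → Fin n)).filter Function.Injective,
    ∏ t : Fin 3, X (j t) ^ ([a,b,c].get t).1 * Y (j t) ^ ([a,b,c].get t).2) = _
  refine Finset.sum_nbij' (fun j => ⟨j 0, j 1, j 2⟩)
    (fun p => ![p.1, p.2.1, p.2.2]) ?_ ?_ ?_ ?_ ?_
  · intro j hj
    simp only [mem_filter, mem_univ, true_and] at hj
    simp only [mem_sigma, mem_sdiff, mem_univ, mem_singleton, mem_insert, true_and]
    refine ⟨fun h => ?_, fun h => ?_⟩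
    · exact (by omega : (0:Fin 3) ≠ 1) (hj h.symm)
    · rcases h with h | h
      · exact (by omega : (0:Fin 3) ≠ 2) (hj h.symm)
      · exact (by omega : (1:Fin 3) ≠ 2) (hj h.symm)
  · intro p hp
    simp only [mem_sigma, mem_sdiff, mem_univ, mem_singleton, mem_insert, true_and,
      not_or] at hp
    simp only [mem_filter, mem_univ, true_and]
    intro x y hxy
    fin_cases x <;> fin_cases y <;> simp_all
  · intro j _; funext t; fin_cases t <;> simp
  · intro p _; simp
  · intro j _
    simp [Fin.prod_univ_three, vF]

lemma vrbikS_four (X Y : Fin n → R) (a b c d : ℕ × ℕ) :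
    vrbikS X Y [a, b, c, d] =
      ∑ i, ∑ j ∈ univ \ {i}, ∑ k ∈ univ \ {i, j}, ∑ l ∈ univ \ {i, j, k},
        vF X Y a i * vF X Y b j * vF X Y c k * vF X Y d l := by
  rw [show (∑ i, ∑ j ∈ univ \ {i}, ∑ k ∈ univ \ {i, j}, ∑ l ∈ univ \ {i, j, k},
        vF X Y a i * vF X Y b j * vF X Y c k * vF X Y d l)
      = ∑ p ∈ (univ : Finset (Fin n)).sigma (fun i =>
          ((univ \ {i}).sigma (fun j => (univ \ ({i, j} : Finset (Fin n))).sigma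
            (fun k => univ \ ({i, j, k} : Finset (Fin n)))))),
          vF X Y a p.1 * vF X Y b p.2.1 * vF X Y c p.2.2.1 * vF X Y d p.2.2.2 by
    rw [Finset.sum_sigma]
    refine Finset.sum_congr rfl fun i _ => ?_
    rw [Finset.sum_sigma]
    refine Finset.sum_congr rfl fun j _ => ?_
    rw [Finset.sum_sigma]]
  show (∑ j ∈ (Finset.univ : Finset (Fin 4 → Fin n)).filter Function.Injective,
    ∏ t : Fin 4, X (j t) ^ ([a,b,c,d].get t).1 * Y (j t) ^ ([a,b,c,d].get t).2) = _
  refine Finset.sum_nbij' (fun j => ⟨j 0, j 1, j 2, j 3⟩)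
    (fun p => ![p.1, p.2.1, p.2.2.1, p.2.2.2]) ?_ ?_ ?_ ?_ ?_
  · intro j hj
    simp only [mem_filter, mem_univ, true_and] at hj
    simp only [mem_sigma, mem_sdiff, mem_univ, mem_singleton, mem_insert, true_and, not_or]
    refine ⟨fun h => ?_, ⟨fun h => ?_, fun h => ?_⟩, fun h => ?_, fun h => ?_, fun h => ?_⟩
    · exact (by omega : (0:Fin 4) ≠ 1) (hj h.symm)
    · exact (by omega : (0:Fin 4) ≠ 2) (hj h.symm)
    · exact (by omega : (1:Fin 4) ≠ 2) (hj h.symm)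
    · exact (by omega : (0:Fin 4) ≠ 3) (hj h.symm)
    · exact (by omega : (1:Fin 4) ≠ 3) (hj h.symm)
    · exact (by omega : (2:Fin 4) ≠ 3) (hj h.symm)
  · intro p hp
    simp only [mem_sigma, mem_sdiff, mem_univ, mem_singleton, mem_insert, true_and,
      not_or] at hp
    simp only [mem_filter, mem_univ, true_and]
    intro x y hxy
    fin_cases x <;> fin_cases y <;> simp_all
  · intro j _; funext t; fin_cases t <;> simp
  · intro p _; simp
  · intro j _
    simp [Fin.prod_univ_four, vF, show ((3:Fin 4):ℕ) = 3 from rfl]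

lemma nest2 (g : Fin n → Fin n → R) :
    ∑ p ∈ (univ ×ˢ univ).filter (fun p : Fin n × Fin n => p.1 ≠ p.2), g p.1 p.2
      = ∑ i, ∑ j ∈ univ \ {i}, g i j :=
  Finset.sum_finset_product' _ univ (fun i => univ \ {i}) (by
    intro p
    simp only [mem_filter, mem_product, mem_univ, mem_sdiff, mem_singleton, true_and]
    tauto)

lemma nest3 (g : Fin n → Fin n → Fin n → R) :
    ∑ p ∈ (univ ×ˢ univ ×ˢ univ).filter
        (fun p : Fin n × Fin n × Fin n => p.1 ≠ p.2.1 ∧ p.1 ≠ p.2.2 ∧ p.2.1 ≠ p.2.2),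
      g p.1 p.2.1 p.2.2
      = ∑ i, ∑ j ∈ univ \ {i}, ∑ k ∈ univ \ {i, j}, g i j k := by
  have h1 : (∑ p ∈ (univ ×ˢ univ ×ˢ univ).filter
        (fun p : Fin n × Fin n × Fin n => p.1 ≠ p.2.1 ∧ p.1 ≠ p.2.2 ∧ p.2.1 ≠ p.2.2),
      g p.1 p.2.1 p.2.2)
      = ∑ i ∈ univ, ∑ q ∈ ((univ \ {i}) ×ˢ univ).filter
          (fun q : Fin n × Fin n => i ≠ q.2 ∧ q.1 ≠ q.2), g i q.1 q.2 :=
    Finset.sum_finset_product' (f := fun c q => g c q.1 q.2)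
      ((univ ×ˢ univ ×ˢ univ).filter
        (fun p : Fin n × Fin n × Fin n => p.1 ≠ p.2.1 ∧ p.1 ≠ p.2.2 ∧ p.2.1 ≠ p.2.2))
      univ (fun i => ((univ \ {i}) ×ˢ univ).filter
        (fun q : Fin n × Fin n => i ≠ q.2 ∧ q.1 ≠ q.2)) (by
      intro p
      simp only [mem_filter, mem_product, mem_univ, mem_sdiff, mem_singleton, true_and]
      aesop)
  rw [h1]
  refine Finset.sum_congr rfl fun i _ => ?_
  exact Finset.sum_finset_product' (f := fun j k => g i j k)
    (((univ \ {i}) ×ˢ univ).filter (fun q : Fin n × Fin n => i ≠ q.2 ∧ q.1 ≠ q.2))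
    (univ \ {i}) (fun j => univ \ {i, j}) (by
    intro q
    simp only [mem_filter, mem_product, mem_univ, mem_sdiff, mem_singleton, mem_insert,
      true_and, not_or]
    aesop)

lemma sym2 (g : Fin n → Fin n → R) :
    ∑ i, ∑ j ∈ univ \ {i}, g i j = ∑ i, ∑ j ∈ univ \ {i}, g j i :=
  calc ∑ i, ∑ j ∈ univ \ {i}, g i j
      = ∑ p ∈ (univ ×ˢ univ).filter (fun p : Fin n × Fin n => p.1 ≠ p.2), g p.1 p.2 :=
        (nest2 g).symm
    _ = ∑ p ∈ (univ ×ˢ univ).filter (fun p : Fin n × Fin n => p.1 ≠ p.2), g p.2 p.1 :=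
        Finset.sum_nbij' Prod.swap Prod.swap
          (by intro p hp; simp only [mem_filter, mem_product, mem_univ, true_and,
                Prod.fst_swap, Prod.snd_swap] at *; exact hp.symm)
          (by intro p hp; simp only [mem_filter, mem_product, mem_univ, true_and,
                Prod.fst_swap, Prod.snd_swap] at *; exact hp.symm)
          (fun p _ => Prod.swap_swap p) (fun p _ => Prod.swap_swap p)
          (fun p _ => rfl)
    _ = ∑ i, ∑ j ∈ univ \ {i}, g j i := nest2 (fun i j => g j i)

lemma sym3_12 (g : Fin n → Fin n → Fin n → R) :
    ∑ i, ∑ j ∈ univ \ {i}, ∑ k ∈ univ \ {i, j}, g i j k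
      = ∑ i, ∑ j ∈ univ \ {i}, ∑ k ∈ univ \ {i, j}, g j i k :=
  calc ∑ i, ∑ j ∈ univ \ {i}, ∑ k ∈ univ \ {i, j}, g i j k
      = ∑ p ∈ (univ ×ˢ univ ×ˢ univ).filter
          (fun p : Fin n × Fin n × Fin n => p.1 ≠ p.2.1 ∧ p.1 ≠ p.2.2 ∧ p.2.1 ≠ p.2.2),
          g p.1 p.2.1 p.2.2 := (nest3 g).symm
    _ = ∑ p ∈ (univ ×ˢ univ ×ˢ univ).filter
          (fun p : Fin n × Fin n × Fin n => p.1 ≠ p.2.1 ∧ p.1 ≠ p.2.2 ∧ p.2.1 ≠ p.2.2),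
          g p.2.1 p.1 p.2.2 :=
        Finset.sum_nbij' (fun p => (p.2.1, p.1, p.2.2)) (fun p => (p.2.1, p.1, p.2.2))
          (by intro p hp
              simp only [mem_filter, mem_product, mem_univ, true_and] at *
              exact ⟨hp.1.symm, hp.2.2, hp.2.1⟩)
          (by intro p hp
              simp only [mem_filter, mem_product, mem_univ, true_and] at *
              exact ⟨hp.1.symm, hp.2.2, hp.2.1⟩)
          (fun p _ => rfl) (fun p _ => rfl) (fun p _ => rfl)
    _ = ∑ i, ∑ j ∈ univ \ {i}, ∑ k ∈ univ \ {i, j}, g j i k := nest3 (fun i j k => g j i k)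

lemma sym3_13 (g : Fin n → Fin n → Fin n → R) :
    ∑ i, ∑ j ∈ univ \ {i}, ∑ k ∈ univ \ {i, j}, g i j k
      = ∑ i, ∑ j ∈ univ \ {i}, ∑ k ∈ univ \ {i, j}, g k j i :=
  calc ∑ i, ∑ j ∈ univ \ {i}, ∑ k ∈ univ \ {i, j}, g i j k
      = ∑ p ∈ (univ ×ˢ univ ×ˢ univ).filter
          (fun p : Fin n × Fin n × Fin n => p.1 ≠ p.2.1 ∧ p.1 ≠ p.2.2 ∧ p.2.1 ≠ p.2.2),
          g p.1 p.2.1 p.2.2 := (nest3 g).symm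
    _ = ∑ p ∈ (univ ×ˢ univ ×ˢ univ).filter
          (fun p : Fin n × Fin n × Fin n => p.1 ≠ p.2.1 ∧ p.1 ≠ p.2.2 ∧ p.2.1 ≠ p.2.2),
          g p.2.2 p.2.1 p.1 :=
        Finset.sum_nbij' (fun p => (p.2.2, p.2.1, p.1)) (fun p => (p.2.2, p.2.1, p.1))
          (by intro p hp
              simp only [mem_filter, mem_product, mem_univ, true_and] at *
              exact ⟨hp.2.2.symm, hp.2.1.symm, hp.1.symm⟩)
          (by intro p hp
              simp only [mem_filter, mem_product, mem_univ, true_and] at *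
              exact ⟨hp.2.2.symm, hp.2.1.symm, hp.1.symm⟩)
          (fun p _ => rfl) (fun p _ => rfl) (fun p _ => rfl)
    _ = ∑ i, ∑ j ∈ univ \ {i}, ∑ k ∈ univ \ {i, j}, g k j i := nest3 (fun i j k => g k j i)

lemma split_two (f : Fin n → R) {i j : Fin n} (h : i ≠ j) :
    ∑ k, f k = f i + f j + ∑ k ∈ univ \ {i, j}, f k := by
  have h1 : (univ : Finset (Fin n)) = insert i (insert j (univ \ {i, j})) := by
    ext x
    by_cases hx : x = i <;> by_cases hx' : x = j <;> simp [hx, hx']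
  conv_lhs => rw [h1]
  rw [Finset.sum_insert (by simp [h]), Finset.sum_insert (by simp), add_assoc]

end Aux

/-- Expansion of `(∑_{i≠j} X_i^2 X_j) (∑_i X_i^2 Y_i)^2` as a linear combination of
augmented symmetric sums. -/
theorem product_augmented_expansion {R : Type*} [CommRing R] (n : ℕ) (X Y : Fin n → R) :
    (∑ p ∈ (univ ×ˢ univ).filter (fun p : Fin n × Fin n => p.1 ≠ p.2),
        X p.1 ^ 2 * X p.2) * (∑ i, X i ^ 2 * Y i) ^ 2 =
      vrbikS X Y [(2,0),(1,0),(2,1),(2,1)]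
      + 2 * vrbikS X Y [(4,1),(1,0),(2,1)]
      + 2 * vrbikS X Y [(3,1),(2,0),(2,1)]
      + vrbikS X Y [(4,2),(1,0),(2,0)]
      + 2 * vrbikS X Y [(4,1),(3,1)]
      + vrbikS X Y [(5,2),(2,0)]
      + vrbikS X Y [(6,2),(1,0)] := by
  have key : ∀ i j : Fin n, i ≠ j →
      X i ^ 2 * X j * ((∑ k, X k ^ 2 * Y k) * (∑ k, X k ^ 2 * Y k)) =
        (∑ k ∈ univ \ {i, j}, ∑ l ∈ (univ \ {i, j}) \ {k},
            X i ^ 2 * X j * ((X k ^ 2 * Y k) * (X l ^ 2 * Y l)))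
        + (∑ l ∈ univ \ {i, j}, (2 * (X i ^ 2 * X j * (X i ^ 2 * Y i))) * (X l ^ 2 * Y l))
        + (∑ l ∈ univ \ {i, j}, (2 * (X i ^ 2 * X j * (X j ^ 2 * Y j))) * (X l ^ 2 * Y l))
        + (∑ k ∈ univ \ {i, j}, X i ^ 2 * X j * ((X k ^ 2 * Y k) * (X k ^ 2 * Y k)))
        + 2 * (X i ^ 2 * X j * ((X i ^ 2 * Y i) * (X j ^ 2 * Y j)))
        + X i ^ 2 * X j * ((X j ^ 2 * Y j) * (X j ^ 2 * Y j))
        + X i ^ 2 * X j * ((X i ^ 2 * Y i) * (X i ^ 2 * Y i)) := by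
    intro i j hij
    have hC : (∑ k, X k ^ 2 * Y k)
        = X i ^ 2 * Y i + X j ^ 2 * Y j + ∑ k ∈ univ \ {i, j}, X k ^ 2 * Y k :=
      split_two _ hij
    rw [hC]
    have hTT : (∑ k ∈ univ \ ({i, j} : Finset (Fin n)), X k ^ 2 * Y k)
          * (∑ k ∈ univ \ ({i, j} : Finset (Fin n)), X k ^ 2 * Y k)
        = (∑ k ∈ univ \ {i, j}, ∑ l ∈ (univ \ {i, j}) \ {k},
            (X k ^ 2 * Y k) * (X l ^ 2 * Y l))
          + ∑ k ∈ univ \ {i, j}, (X k ^ 2 * Y k) * (X k ^ 2 * Y k) := by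
      rw [Finset.sum_mul, ← Finset.sum_add_distrib]
      refine Finset.sum_congr rfl fun k hk => ?_
      rw [Finset.mul_sum, Finset.sum_eq_sum_sdiff_singleton_add hk]
    have e1 : X i ^ 2 * X j *
        ((X i ^ 2 * Y i + X j ^ 2 * Y j + ∑ k ∈ univ \ {i, j}, X k ^ 2 * Y k)
          * (X i ^ 2 * Y i + X j ^ 2 * Y j + ∑ k ∈ univ \ {i, j}, X k ^ 2 * Y k))
        = X i ^ 2 * X j * ((∑ k ∈ univ \ ({i, j} : Finset (Fin n)), X k ^ 2 * Y k)
            * (∑ k ∈ univ \ ({i, j} : Finset (Fin n)), X k ^ 2 * Y k))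
          + (2 * (X i ^ 2 * X j * (X i ^ 2 * Y i)))
              * (∑ k ∈ univ \ ({i, j} : Finset (Fin n)), X k ^ 2 * Y k)
          + (2 * (X i ^ 2 * X j * (X j ^ 2 * Y j)))
              * (∑ k ∈ univ \ ({i, j} : Finset (Fin n)), X k ^ 2 * Y k)
          + 2 * (X i ^ 2 * X j * ((X i ^ 2 * Y i) * (X j ^ 2 * Y j)))
          + X i ^ 2 * X j * ((X j ^ 2 * Y j) * (X j ^ 2 * Y j))
          + X i ^ 2 * X j * ((X i ^ 2 * Y i) * (X i ^ 2 * Y i)) := by ring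
    rw [e1, hTT, mul_add]
    simp only [Finset.mul_sum]
    ring
  rw [sq]
  rw [show (∑ p ∈ (univ ×ˢ univ).filter (fun p : Fin n × Fin n => p.1 ≠ p.2),
      X p.1 ^ 2 * X p.2) = ∑ i, ∑ j ∈ univ \ {i}, X i ^ 2 * X j from
      nest2 (fun i j => X i ^ 2 * X j)]
  rw [Finset.sum_mul]
  refine Eq.trans (Finset.sum_congr rfl fun i _ => Eq.trans (Finset.sum_mul _ _ _)
    (Finset.sum_congr rfl fun j hj =>
      key i j (by
        simp only [mem_sdiff, mem_univ, mem_singleton, true_and] at hj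
        exact fun h => hj h.symm))) ?_
  simp only [Finset.sum_add_distrib]
  rw [vrbikS_four X Y (2,0) (1,0) (2,1) (2,1), vrbikS_three X Y (4,1) (1,0) (2,1),
    vrbikS_three X Y (3,1) (2,0) (2,1), vrbikS_three X Y (4,2) (1,0) (2,0),
    vrbikS_two X Y (4,1) (3,1), vrbikS_two X Y (5,2) (2,0), vrbikS_two X Y (6,2) (1,0)]
  refine congrArg₂ (· + ·) (congrArg₂ (· + ·) (congrArg₂ (· + ·) (congrArg₂ (· + ·)
    (congrArg₂ (· + ·) (congrArg₂ (· + ·) ?g7 ?g4) ?g5) ?g6) ?g2) ?g3) ?g1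
  case g7 =>
    refine Finset.sum_congr rfl fun i _ => Finset.sum_congr rfl fun j _ =>
      Finset.sum_congr rfl fun k _ => ?_
    rw [show (univ \ ({i, j} : Finset (Fin n))) \ {k} = univ \ {i, j, k} from by
      ext x; simp only [mem_sdiff, mem_univ, mem_singleton, mem_insert, true_and, not_or]
      tauto]
    exact Finset.sum_congr rfl fun l _ => by simp only [vF]; ring
  case g4 =>
    simp only [Finset.mul_sum]
    refine Finset.sum_congr rfl fun i _ => Finset.sum_congr rfl fun j _ =>
      Finset.sum_congr rfl fun l _ => ?_
    simp only [vF]; ring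
  case g5 =>
    refine Eq.trans (sym3_12 (fun i j l =>
      (2 * (X i ^ 2 * X j * (X j ^ 2 * Y j))) * (X l ^ 2 * Y l))) ?_
    simp only [Finset.mul_sum]
    refine Finset.sum_congr rfl fun i _ => Finset.sum_congr rfl fun j _ =>
      Finset.sum_congr rfl fun l _ => ?_
    simp only [vF]; ring
  case g6 =>
    refine Eq.trans (sym3_13 (fun i j k =>
      X i ^ 2 * X j * ((X k ^ 2 * Y k) * (X k ^ 2 * Y k)))) ?_
    refine Finset.sum_congr rfl fun i _ => Finset.sum_congr rfl fun j _ =>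
      Finset.sum_congr rfl fun k _ => ?_
    simp only [vF]; ring
  case g2 =>
    simp only [Finset.mul_sum]
    refine Finset.sum_congr rfl fun i _ => Finset.sum_congr rfl fun j _ => ?_
    simp only [vF]; ring
  case g3 =>
    refine Eq.trans (sym2 (fun i j =>
      X i ^ 2 * X j * ((X j ^ 2 * Y j) * (X j ^ 2 * Y j)))) ?_
    refine Finset.sum_congr rfl fun i _ => Finset.sum_congr rfl fun j _ => ?_
    simp only [vF]; ring
  case g1 =>
    refine Finset.sum_congr rfl fun i _ => Finset.sum_congr rfl fun j _ => ?_
    simp only [vF]; ring
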